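/- arXiv:1701.00616 — 7 statements merged into one kernel-verified Lean document; each statement's English description precedes it below -/
import Mathlib

section
/- Let f : ℝⁿ → ℝᵐ, α ∈ (0,1], and a = (a₁,...,aₙ) ∈ ℝⁿ with each aᵢ > 0. If f is α-differentiable at a and f is (Fréchet) differentiable at a with derivative Df(a), then D^α f(a) = Df(a) ∘ L_a^{1-α}, where L_a^{1-α} : ℝⁿ → ℝⁿ is the linear map defined by L_a^{1-α}(x₁,...,xₙ) = (a₁^{1-α}x₁, ..., aₙ^{1-α}xₙ). -/
/-! The conformable shift `h ↦ confShift α a h` is the affine map `h ↦ a + S h`, with `S` the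
diagonal scaling by `aᵢ^{1-α}`. Conformable differentiability of `f` at `a` says precisely that
`f ∘ confShift α a` is Fréchet differentiable at `0` with derivative `L`, while the chain rule gives
the derivative `Df ∘ S` there; uniqueness of the Fréchet derivative gives `L = Df ∘ S`. -/

open Filter Topology

/-- The conformably shifted point `(a₁ + h₁a₁^{1-α}, ..., aₙ + hₙaₙ^{1-α})`. -/
noncomputable def confShift {n : ℕ} (α : ℝ) (a h : EuclideanSpace ℝ (Fin n)) :
    EuclideanSpace ℝ (Fin n) :=
  WithLp.toLp 2 (fun i => a i + h i * a i ^ (1 - α))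

/-- `f` is conformably `α`-differentiable at `a` with conformable derivative the
linear map `L`, i.e. `lim_{h→0} ‖f(a₁+h₁a₁^{1-α},...,aₙ+hₙaₙ^{1-α}) - f(a) - L(h)‖/‖h‖ = 0`. -/
def ConformableAt {n : ℕ} {F : Type*} [NormedAddCommGroup F] [NormedSpace ℝ F]
    (α : ℝ) (f : EuclideanSpace ℝ (Fin n) → F) (a : EuclideanSpace ℝ (Fin n))
    (L : EuclideanSpace ℝ (Fin n) →ₗ[ℝ] F) : Prop :=
  Filter.Tendsto (fun h : EuclideanSpace ℝ (Fin n) =>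
      ‖f (confShift α a h) - f a - L h‖ / ‖h‖) (𝓝[≠] 0) (𝓝 0)

open Matrix Asymptotics

theorem toEuclideanCLM_diagonal_apply {ι : Type*} [Fintype ι] [DecidableEq ι] (c : ι → ℝ)
    (x : EuclideanSpace ℝ ι) :
    toEuclideanCLM (𝕜 := ℝ) (diagonal c) x = WithLp.toLp 2 (fun i => c i * x i) := by
  ext i
  simp [ofLp_toEuclideanCLM, mulVec_diagonal]

theorem hasFDerivAt_of_tendsto_nhdsNE {E F : Type*} [NormedAddCommGroup E] [NormedSpace ℝ E]
    [NormedAddCommGroup F] [NormedSpace ℝ F] {g : E → F} {g' : E →L[ℝ] F} {x : E}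
    (hg : Tendsto (fun h => ‖g (x + h) - g x - g' h‖ / ‖h‖) (𝓝[≠] 0) (𝓝 0)) :
    HasFDerivAt g g' x := by
  rw [hasFDerivAt_iff_isLittleO_nhds_zero, ← isLittleO_norm_left, ← isLittleO_norm_right,
    isLittleO_iff_tendsto (by simp +contextual), ← nhdsNE_sup_pure, tendsto_sup]
  exact ⟨hg, tendsto_pure_left.2 fun s hs => by simpa using mem_of_mem_nhds hs⟩

section confShift

variable {n : ℕ} (α : ℝ) (a : EuclideanSpace ℝ (Fin n))

@[simp]
theorem confShift_zero : confShift α a 0 = a := by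
  ext i
  simp [confShift]

theorem confShift_eq_add_toEuclideanCLM (h : EuclideanSpace ℝ (Fin n)) :
    confShift α a h = a + toEuclideanCLM (𝕜 := ℝ) (diagonal fun i => a i ^ (1 - α)) h := by
  ext i
  simp [confShift, toEuclideanCLM_diagonal_apply, mul_comm]

theorem hasFDerivAt_confShift (h : EuclideanSpace ℝ (Fin n)) :
    HasFDerivAt (confShift α a)
      (toEuclideanCLM (𝕜 := ℝ) (diagonal fun i => a i ^ (1 - α))) h := by
  simpa [← funext (confShift_eq_add_toEuclideanCLM α a)] using
    (toEuclideanCLM (𝕜 := ℝ) (diagonal fun i => a i ^ (1 - α))).hasFDerivAt.const_add a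

end confShift

theorem ConformableAt.hasFDerivAt_comp_confShift {n : ℕ} {F : Type*} [NormedAddCommGroup F]
    [NormedSpace ℝ F] {α : ℝ} {f : EuclideanSpace ℝ (Fin n) → F} {a : EuclideanSpace ℝ (Fin n)}
    {L : EuclideanSpace ℝ (Fin n) →ₗ[ℝ] F} (hL : ConformableAt α f a L) :
    HasFDerivAt (fun h => f (confShift α a h)) L.toContinuousLinearMap 0 :=
  hasFDerivAt_of_tendsto_nhdsNE <| by
    simpa only [ConformableAt, zero_add, confShift_zero, LinearMap.coe_toContinuousLinearMap']
      using hL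

theorem conformable_eq_fderiv_comp_scaling_general {n m : ℕ} (α : ℝ)
    (f : EuclideanSpace ℝ (Fin n) → EuclideanSpace ℝ (Fin m))
    (a : EuclideanSpace ℝ (Fin n))
    (L : EuclideanSpace ℝ (Fin n) →ₗ[ℝ] EuclideanSpace ℝ (Fin m))
    (hL : ConformableAt α f a L)
    (Df : EuclideanSpace ℝ (Fin n) →L[ℝ] EuclideanSpace ℝ (Fin m))
    (hDf : HasFDerivAt f Df a) :
    ∀ x : EuclideanSpace ℝ (Fin n),
      L x = Df (WithLp.toLp 2 (fun i => a i ^ (1 - α) * x i) : EuclideanSpace ℝ (Fin n)) := by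
  have hchain := (confShift_zero α a ▸ hDf).comp 0 (hasFDerivAt_confShift α a 0)
  have hunique := hL.hasFDerivAt_comp_confShift.unique hchain
  intro x
  simpa [toEuclideanCLM_diagonal_apply] using congrArg (fun T => T x) hunique

/-- If `f` is conformably `α`-differentiable at `a` and Fréchet differentiable at `a`
with derivative `Df`, then `D^α f(a) = Df ∘ L_a^{1-α}` where
`L_a^{1-α}(x₁,...,xₙ) = (a₁^{1-α}x₁,...,aₙ^{1-α}xₙ)`. -/
theorem conformable_eq_fderiv_comp_scaling {n m : ℕ} (α : ℝ) (hα : α ∈ Set.Ioc (0:ℝ) 1)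
    (f : EuclideanSpace ℝ (Fin n) → EuclideanSpace ℝ (Fin m))
    (a : EuclideanSpace ℝ (Fin n)) (ha : ∀ i, 0 < a i)
    (L : EuclideanSpace ℝ (Fin n) →ₗ[ℝ] EuclideanSpace ℝ (Fin m))
    (hL : ConformableAt α f a L)
    (Df : EuclideanSpace ℝ (Fin n) →L[ℝ] EuclideanSpace ℝ (Fin m))
    (hDf : HasFDerivAt f Df a) :
    ∀ x : EuclideanSpace ℝ (Fin n),
      L x = Df (WithLp.toLp 2 (fun i => a i ^ (1 - α) * x i) : EuclideanSpace ℝ (Fin n)) :=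
  conformable_eq_fderiv_comp_scaling_general α f a L hL Df hDf
end

section
/- Let f : ℝⁿ → ℝᵐ, α ∈ (0,1], and a = (a₁,...,aₙ) ∈ ℝⁿ with each aᵢ > 0. If f is (Fréchet) differentiable at a, then f is α-differentiable at a and the conformable Jacobian matrix satisfies f^α(a) = f'(a) · diag(a₁^{1-α}, ..., aₙ^{1-α}), i.e., its (i,j) entry equals aⱼ^{1-α} times the (i,j) entry of the usual Jacobian matrix f'(a) of f at a. -/
open Filter Topology

/-!
Writing `D = diag(a₁^{1-α}, ..., aₙ^{1-α})`, the conformably shifted point is `a + D h`, so the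
conformable difference quotient of `f` at `a` is the ordinary one of `h ↦ f (a + D h)` at `0`.
By the chain rule this map is differentiable at `0` with derivative `f'(a) ∘ D`, whose `j`-th
column is `aⱼ^{1-α}` times that of `f'(a)`.
-/

theorem HasFDerivAt.tendsto_comp_add_clm {E F G : Type*} [NormedAddCommGroup E]
    [NormedSpace ℝ E] [NormedAddCommGroup F] [NormedSpace ℝ F] [NormedAddCommGroup G]
    [NormedSpace ℝ G] {f : E → F} {f' : E →L[ℝ] F} {x : E} (hf : HasFDerivAt f f' x)
    (D : G →L[ℝ] E) :
    Tendsto (fun h => ‖f (x + D h) - f x - f' (D h)‖ / ‖h‖) (𝓝 0) (𝓝 0) := by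
  have hcomp : HasFDerivAt (fun h => f (x + D h)) (f'.comp D) 0 :=
    (by simpa using hf : HasFDerivAt f f' (x + D 0)).comp 0 (D.hasFDerivAt.const_add x)
  simpa [div_eq_inv_mul] using hasFDerivAt_iff_tendsto.mp hcomp

section DiagonalScaling

variable {ι 𝕜 : Type*} [RCLike 𝕜] [Fintype ι] [DecidableEq ι]

theorem Matrix.toEuclideanCLM_diagonal_apply (w : ι → 𝕜) (x : EuclideanSpace 𝕜 ι) (i : ι) :
    Matrix.toEuclideanCLM (𝕜 := 𝕜) (diagonal w) x i = w i * x i := by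
  simp [mulVec_diagonal]

theorem Matrix.toEuclideanCLM_diagonal_single (w : ι → 𝕜) (j : ι) (c : 𝕜) :
    Matrix.toEuclideanCLM (𝕜 := 𝕜) (diagonal w) (EuclideanSpace.single j c)
      = w j • EuclideanSpace.single j c := by
  ext k
  rcases eq_or_ne k j with rfl | hkj <;> simp [toEuclideanCLM_diagonal_apply, *]

end DiagonalScaling

noncomputable def conformableDiag {n : ℕ} (α : ℝ) (a : EuclideanSpace ℝ (Fin n)) :
    Matrix (Fin n) (Fin n) ℝ :=
  Matrix.diagonal fun i => a i ^ (1 - α)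

theorem confShift_eq_add_conformableDiag {n : ℕ} (α : ℝ) (a h : EuclideanSpace ℝ (Fin n)) :
    confShift α a h = a + Matrix.toEuclideanCLM (𝕜 := ℝ) (conformableDiag α a) h := by
  ext i
  rw [PiLp.add_apply, conformableDiag, Matrix.toEuclideanCLM_diagonal_apply, mul_comm]
  rfl

theorem HasFDerivAt.conformableAt {n : ℕ} {F : Type*} [NormedAddCommGroup F] [NormedSpace ℝ F]
    {f : EuclideanSpace ℝ (Fin n) → F} {f' : EuclideanSpace ℝ (Fin n) →L[ℝ] F}
    {a : EuclideanSpace ℝ (Fin n)} (hf : HasFDerivAt f f' a) (α : ℝ) :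
    ConformableAt α f a (f'.comp (Matrix.toEuclideanCLM (𝕜 := ℝ) (conformableDiag α a))) := by
  unfold ConformableAt
  simp only [confShift_eq_add_conformableDiag]
  exact (hf.tendsto_comp_add_clm _).mono_left nhdsWithin_le_nhds

theorem conformable_of_differentiable_jacobian_general {n m : ℕ} (α : ℝ)
    (f : EuclideanSpace ℝ (Fin n) → EuclideanSpace ℝ (Fin m))
    (a : EuclideanSpace ℝ (Fin n))
    (hf : DifferentiableAt ℝ f a) :
    ∃ L : EuclideanSpace ℝ (Fin n) →ₗ[ℝ] EuclideanSpace ℝ (Fin m),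
      ConformableAt α f a L ∧
      ∀ (i : Fin m) (j : Fin n),
        L (EuclideanSpace.single j 1) i
          = a j ^ (1 - α) * (fderiv ℝ f a) (EuclideanSpace.single j 1) i := by
  refine ⟨_, hf.hasFDerivAt.conformableAt α, fun i j => ?_⟩
  rw [ContinuousLinearMap.coe_coe, ContinuousLinearMap.comp_apply, conformableDiag,
    Matrix.toEuclideanCLM_diagonal_single, map_smul, PiLp.smul_apply, smul_eq_mul]

/-- If `f` is Fréchet differentiable at `a` (each `aᵢ > 0`), then `f` is conformably
`α`-differentiable at `a` and the conformable Jacobian matrix satisfies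
`f^α(a) = f'(a) · diag(a₁^{1-α},...,aₙ^{1-α})`, entrywise
`f^α(a)_{ij} = aⱼ^{1-α} · f'(a)_{ij}`. -/
theorem conformable_of_differentiable_jacobian {n m : ℕ} (α : ℝ) (hα : α ∈ Set.Ioc (0:ℝ) 1)
    (f : EuclideanSpace ℝ (Fin n) → EuclideanSpace ℝ (Fin m))
    (a : EuclideanSpace ℝ (Fin n)) (ha : ∀ i, 0 < a i)
    (hf : DifferentiableAt ℝ f a) :
    ∃ L : EuclideanSpace ℝ (Fin n) →ₗ[ℝ] EuclideanSpace ℝ (Fin m),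
      ConformableAt α f a L ∧
      ∀ (i : Fin m) (j : Fin n),
        L (EuclideanSpace.single j 1) i
          = a j ^ (1 - α) * (fderiv ℝ f a) (EuclideanSpace.single j 1) i :=
  conformable_of_differentiable_jacobian_general α f a hf
end

section
/- (Chain rule) Let α ∈ (0,1], f : ℝⁿ → ℝᵐ with component functions f₁,...,fₘ, and g : ℝᵐ → ℝᵖ. Let a = (a₁,...,aₙ) ∈ ℝⁿ with each aᵢ > 0 and suppose fᵢ(a) > 0 for all i = 1,...,m. If f is α-differentiable at a and g is α-differentiable at f(a), then g ∘ f is α-differentiable at a and D^α(g ∘ f)(a) = D^α g(f(a)) ∘ f(a)^{α-1} ∘ D^α f(a), where f(a)^{α-1} : ℝᵐ → ℝᵐ is the linear map defined by f(a)^{α-1}(x₁,...,xₘ) = (x₁ f₁(a)^{α-1}, ..., xₘ fₘ(a)^{α-1}). -/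
/-!
Since `aᵢ + hᵢ aᵢ^{1-α} = a + diag(a^{1-α}) h` and `diag(a^{1-α})` is invertible when every
`aᵢ > 0`, `f` is `α`-differentiable at `a` with conformable derivative `L` exactly when it is
Fréchet differentiable at `a` with derivative `L ∘ diag(a^{α-1})`. The conformable chain rule is
then the Fréchet chain rule, read back through these rescalings.
-/

open Filter Topology

namespace EuclideanSpace

variable {ι : Type*} [Fintype ι] [DecidableEq ι]

noncomputable def diagScale (w : ι → ℝ) : EuclideanSpace ℝ ι →L[ℝ] EuclideanSpace ℝ ι :=
  Matrix.toEuclideanCLM (𝕜 := ℝ) (n := ι) (Matrix.diagonal w)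

@[simp]
theorem diagScale_apply (w : ι → ℝ) (x : EuclideanSpace ℝ ι) (i : ι) :
    diagScale w x i = w i * x i :=
  Matrix.mulVec_diagonal w x.ofLp i

theorem diagScale_one : diagScale (1 : ι → ℝ) = ContinuousLinearMap.id ℝ _ := by
  ext x i
  simp

theorem diagScale_comp_diagScale (v w : ι → ℝ) :
    (diagScale v).comp (diagScale w) = diagScale (v * w) := by
  ext x i
  simp [mul_assoc]

noncomputable def diagScaleEquiv (v w : ι → ℝ) (hvw : v * w = 1) :
    EuclideanSpace ℝ ι ≃L[ℝ] EuclideanSpace ℝ ι :=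
  .equivOfInverse' (diagScale v) (diagScale w)
    (by rw [diagScale_comp_diagScale, hvw, diagScale_one])
    (by rw [diagScale_comp_diagScale, mul_comm, hvw, diagScale_one])

end EuclideanSpace

open EuclideanSpace

section Conformable

variable {n : ℕ} {F : Type*} [NormedAddCommGroup F] [NormedSpace ℝ F]

theorem confShift_eq_add_diagScale (α : ℝ) (a h : EuclideanSpace ℝ (Fin n)) :
    confShift α a h = a + diagScale (fun i => a i ^ (1 - α)) h := by
  ext i
  simp [confShift, mul_comm]

theorem conformableAt_iff_hasFDerivAt_comp_confShift (α : ℝ) (f : EuclideanSpace ℝ (Fin n) → F)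
    (a : EuclideanSpace ℝ (Fin n)) (L : EuclideanSpace ℝ (Fin n) →ₗ[ℝ] F) :
    ConformableAt α f a L ↔
      HasFDerivAt (fun h => f (confShift α a h)) L.toContinuousLinearMap 0 := by
  have hshift : confShift α a 0 = a := by simp [confShift_eq_add_diagScale]
  rw [hasFDerivAt_iff_tendsto, ConformableAt]
  simp only [sub_zero, hshift, LinearMap.coe_toContinuousLinearMap', ← div_eq_inv_mul]
  set quot := fun h => ‖f (confShift α a h) - f a - L h‖ / ‖h‖
  -- `0 / 0 = 0`, so removing `h = 0` from the limit changes nothing.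
  have hquot : quot 0 = 0 := by simp [quot]
  have := continuousWithinAt_compl_self (f := quot) (x := 0)
  rwa [ContinuousWithinAt, ContinuousAt, hquot] at this

theorem conformableAt_iff_hasFDerivAt {α : ℝ} {f : EuclideanSpace ℝ (Fin n) → F}
    {a : EuclideanSpace ℝ (Fin n)} (ha : ∀ i, 0 < a i) {L : EuclideanSpace ℝ (Fin n) →ₗ[ℝ] F} :
    ConformableAt α f a L ↔
      HasFDerivAt f (L.toContinuousLinearMap.comp (diagScale fun i => a i ^ (α - 1))) a := by
  let D := diagScaleEquiv (fun i => a i ^ (1 - α)) (fun i => a i ^ (α - 1)) <| by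
    funext i
    simp [← Real.rpow_add (ha i)]
  have hshift : (fun h => f (confShift α a h)) = (fun y => f (a + y)) ∘ D :=
    funext fun h => congrArg f (confShift_eq_add_diagScale α a h)
  rw [conformableAt_iff_hasFDerivAt_comp_confShift, hshift, D.comp_right_hasFDerivAt_iff',
    map_zero, hasFDerivAt_comp_add_left, add_zero]
  rfl

end Conformable

theorem conformable_chain_rule_general {n m p : ℕ} (α : ℝ)
    (f : EuclideanSpace ℝ (Fin n) → EuclideanSpace ℝ (Fin m))
    (g : EuclideanSpace ℝ (Fin m) → EuclideanSpace ℝ (Fin p))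
    (a : EuclideanSpace ℝ (Fin n)) (ha : ∀ i, 0 < a i) (hfa : ∀ i, 0 < f a i)
    (L : EuclideanSpace ℝ (Fin n) →ₗ[ℝ] EuclideanSpace ℝ (Fin m))
    (M : EuclideanSpace ℝ (Fin m) →ₗ[ℝ] EuclideanSpace ℝ (Fin p))
    (hf : ConformableAt α f a L) (hg : ConformableAt α g (f a) M) :
    ∃ N : EuclideanSpace ℝ (Fin n) →ₗ[ℝ] EuclideanSpace ℝ (Fin p),
      ConformableAt α (g ∘ f) a N ∧
      ∀ h : EuclideanSpace ℝ (Fin n),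
        N h = M (WithLp.toLp 2 (fun i => f a i ^ (α - 1) * L h i) : EuclideanSpace ℝ (Fin m)) := by
  rw [conformableAt_iff_hasFDerivAt ha] at hf
  rw [conformableAt_iff_hasFDerivAt hfa] at hg
  let N := M ∘ₗ (diagScale fun i => f a i ^ (α - 1)).toLinearMap ∘ₗ L
  refine ⟨N, ?_, fun h => ?_⟩
  · have hN : N.toContinuousLinearMap.comp (diagScale fun i => a i ^ (α - 1)) =
        (M.toContinuousLinearMap.comp (diagScale fun i => f a i ^ (α - 1))).comp
          (L.toContinuousLinearMap.comp (diagScale fun i => a i ^ (α - 1))) :=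
      rfl
    rw [conformableAt_iff_hasFDerivAt ha, hN]
    exact hg.comp a hf
  · exact congrArg M (by ext i; simp)

/-- Chain rule: if `f` is conformably `α`-differentiable at `a` (each `aᵢ > 0`,
each `fᵢ(a) > 0`) and `g` is conformably `α`-differentiable at `f(a)`, then `g ∘ f`
is conformably `α`-differentiable at `a` with
`D^α(g ∘ f)(a) = D^α g(f(a)) ∘ f(a)^{α-1} ∘ D^α f(a)`, where
`f(a)^{α-1}(x₁,...,xₘ) = (x₁f₁(a)^{α-1},...,xₘfₘ(a)^{α-1})`. -/
theorem conformable_chain_rule {n m p : ℕ} (α : ℝ) (hα : α ∈ Set.Ioc (0:ℝ) 1)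
    (f : EuclideanSpace ℝ (Fin n) → EuclideanSpace ℝ (Fin m))
    (g : EuclideanSpace ℝ (Fin m) → EuclideanSpace ℝ (Fin p))
    (a : EuclideanSpace ℝ (Fin n)) (ha : ∀ i, 0 < a i) (hfa : ∀ i, 0 < f a i)
    (L : EuclideanSpace ℝ (Fin n) →ₗ[ℝ] EuclideanSpace ℝ (Fin m))
    (M : EuclideanSpace ℝ (Fin m) →ₗ[ℝ] EuclideanSpace ℝ (Fin p))
    (hf : ConformableAt α f a L) (hg : ConformableAt α g (f a) M) :
    ∃ N : EuclideanSpace ℝ (Fin n) →ₗ[ℝ] EuclideanSpace ℝ (Fin p),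
      ConformableAt α (g ∘ f) a N ∧
      ∀ h : EuclideanSpace ℝ (Fin n),
        N h = M (WithLp.toLp 2 (fun i => f a i ^ (α - 1) * L h i) : EuclideanSpace ℝ (Fin m)) :=
  conformable_chain_rule_general α f g a ha hfa L M hf hg
end

section
/- Let α ∈ (0,1] and f, g : ℝ → ℝ. Let a > 0 with f(a) > 0. If f is α-differentiable at a (i.e., T_α(f)(a) exists) and g is α-differentiable at f(a), then g ∘ f is α-differentiable at a and T_α(g ∘ f)(a) = T_α(g)(f(a)) · T_α(f)(a) · f(a)^{α-1}. -/
/-! For `x > 0` the substitution `t = h · x^(1-α)` turns the conformable difference quotient into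
`x^(1-α)` times the ordinary one, so `T_α f (x) = x^(1-α) f'(x)` and the chain rule for `T_α`
is the ordinary chain rule. -/

open Filter Topology

/-- `f` has conformable derivative `L` of order `α` at `x`, i.e.
`T_α(f)(x) = lim_{h→0} (f(x + h·x^{1-α}) - f(x))/h` exists and equals `L`. -/
def HasConfDerivAt (α : ℝ) (f : ℝ → ℝ) (x L : ℝ) : Prop :=
  Filter.Tendsto (fun h : ℝ => (f (x + h * x ^ (1 - α)) - f x) / h) (𝓝[≠] (0:ℝ)) (𝓝 L)

theorem hasDerivAt_iff_tendsto_scaled_slope_zero {f : ℝ → ℝ} {f' x c : ℝ} (hc : c ≠ 0) :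
    HasDerivAt f f' x ↔
      Tendsto (fun h => (f (x + h * c) - f x) / h) (𝓝[≠] 0) (𝓝 (f' * c)) := by
  have hquot : (fun h => (f (x + h * c) - f x) / h) =
      (fun t => t⁻¹ • (f (x + t) - f x) * c) ∘ (· * c) := by
    funext h
    by_cases h0 : h = 0
    · simp [h0]
    · simp only [Function.comp_apply, smul_eq_mul]
      field_simp
  have hmap : map (· * c) (𝓝[≠] (0 : ℝ)) = 𝓝[≠] 0 := by
    simpa using (Homeomorph.mulRight₀ c hc).map_punctured_nhds_eq 0
  rw [hasDerivAt_iff_tendsto_slope_zero, hquot, ← tendsto_map'_iff, hmap,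
    (Homeomorph.mulRight₀ c hc).isInducing.tendsto_nhds_iff]
  rfl

theorem hasConfDerivAt_iff_hasDerivAt {α : ℝ} {f : ℝ → ℝ} {x L : ℝ} (hx : 0 < x) :
    HasConfDerivAt α f x L ↔ HasDerivAt f (L * x ^ (α - 1)) x := by
  have hpow : x ^ (α - 1) * x ^ (1 - α) = 1 := by
    rw [← Real.rpow_add hx]; simp
  rw [hasDerivAt_iff_tendsto_scaled_slope_zero (Real.rpow_pos_of_pos hx (1 - α)).ne',
    mul_assoc, hpow, mul_one]
  rfl

theorem conf_deriv_chain_rule_general (α : ℝ) (f g : ℝ → ℝ)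
    (a : ℝ) (ha : 0 < a) (hfa : 0 < f a) (F G : ℝ)
    (hf : HasConfDerivAt α f a F) (hg : HasConfDerivAt α g (f a) G) :
    HasConfDerivAt α (g ∘ f) a (G * F * f a ^ (α - 1)) := by
  rw [hasConfDerivAt_iff_hasDerivAt ha] at hf ⊢
  rw [hasConfDerivAt_iff_hasDerivAt hfa] at hg
  exact (hg.comp a hf).congr_deriv (by ring)

/-- Chain rule for the conformable derivative: if `f` is `α`-differentiable at `a > 0`
with `f(a) > 0` and `g` is `α`-differentiable at `f(a)`, then `g ∘ f` is
`α`-differentiable at `a` and `T_α(g∘f)(a) = T_α(g)(f(a))·T_α(f)(a)·f(a)^{α-1}`. -/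
theorem conf_deriv_chain_rule (α : ℝ) (hα : α ∈ Set.Ioc (0:ℝ) 1) (f g : ℝ → ℝ)
    (a : ℝ) (ha : 0 < a) (hfa : 0 < f a) (F G : ℝ)
    (hf : HasConfDerivAt α f a F) (hg : HasConfDerivAt α g (f a) G) :
    HasConfDerivAt α (g ∘ f) a (G * F * f a ^ (α - 1)) :=
  conf_deriv_chain_rule_general α f g a ha hfa F G hf hg
end

section
/- Let f : ℝⁿ → ℝᵐ with component functions f₁,...,fₘ, α ∈ (0,1], and a = (a₁,...,aₙ) ∈ ℝⁿ with each aᵢ > 0. If f is α-differentiable at a, then for all 1 ≤ i ≤ m and 1 ≤ j ≤ n the j-th conformable partial derivative (∂^α/∂x_j^α) fᵢ(a) exists, and the (i,j) entry of the conformable Jacobian matrix f^α(a) equals (∂^α/∂x_j^α) fᵢ(a). -/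
open Filter Topology

/-- `g : ℝⁿ → ℝ` has `j`-th conformable partial derivative `v` of order `α` at `a`,
i.e. `lim_{ε→0} (g(a₁,...,aⱼ + ε·aⱼ^{1-α},...,aₙ) - g(a))/ε = v`. -/
noncomputable def HasConfPartialAt {n : ℕ} (α : ℝ) (g : EuclideanSpace ℝ (Fin n) → ℝ)
    (a : EuclideanSpace ℝ (Fin n)) (j : Fin n) (v : ℝ) : Prop :=
  Filter.Tendsto (fun ε : ℝ =>
      (g (WithLp.toLp 2 (Function.update a j (a j + ε * a j ^ (1 - α)))) - g a) / ε) (𝓝[≠] 0) (𝓝 v)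

/-! Along the line `h = ε • eⱼ` the conformable shift moves only the `j`-th coordinate, to
`aⱼ + ε aⱼ^{1-α}`, and `‖h‖ = |ε|`; so the limit defining `ConformableAt` specialises to the
difference quotient of `f` in the `j`-th conformable direction, and taking the continuous
`i`-th coordinate gives the partial derivative of `fᵢ`. -/

section Directional

variable {𝕜 E F : Type*} [NontriviallyNormedField 𝕜]
  [NormedAddCommGroup E] [NormedSpace 𝕜 E] [NormedAddCommGroup F] [NormedSpace 𝕜 F]

theorem tendsto_smul_const_nhdsNE_zero {v : E} (hv : v ≠ 0) :
    Tendsto (fun ε : 𝕜 => ε • v) (𝓝[≠] 0) (𝓝[≠] 0) := by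
  refine tendsto_nhdsWithin_of_tendsto_nhds_of_eventually_within _ ?_ ?_
  · simpa using (tendsto_id.smul_const v).mono_left (nhdsWithin_le_nhds (a := (0 : 𝕜)))
  · filter_upwards [self_mem_nhdsWithin] with ε hε
    exact smul_ne_zero hε hv

theorem tendsto_inv_smul_of_tendsto_norm_sub_div {g : E → F} {L : E →ₗ[𝕜] F}
    (hg : Tendsto (fun h => ‖g h - L h‖ / ‖h‖) (𝓝[≠] 0) (𝓝 0)) {v : E} (hv : v ≠ 0) :
    Tendsto (fun ε : 𝕜 => ε⁻¹ • g (ε • v)) (𝓝[≠] 0) (𝓝 (L v)) := by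
  rw [tendsto_iff_norm_sub_tendsto_zero]
  have hlim := (hg.comp (tendsto_smul_const_nhdsNE_zero (𝕜 := 𝕜) hv)).mul_const ‖v‖
  rw [zero_mul] at hlim
  refine hlim.congr' ?_
  filter_upwards [self_mem_nhdsWithin] with ε (hε : ε ≠ 0)
  simp only [Function.comp_apply, map_smul, norm_smul]
  calc ‖g (ε • v) - ε • L v‖ / (‖ε‖ * ‖v‖) * ‖v‖ = ‖ε⁻¹‖ * ‖g (ε • v) - ε • L v‖ := by
        rw [norm_inv]
        field_simp
    _ = ‖ε⁻¹ • g (ε • v) - L v‖ := by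
        rw [← norm_smul, smul_sub, inv_smul_smul₀ hε]

end Directional

theorem confShift_smul_single {n : ℕ} (α : ℝ) (a : EuclideanSpace ℝ (Fin n)) (j : Fin n)
    (ε : ℝ) :
    confShift α a (ε • EuclideanSpace.single j 1) =
      WithLp.toLp 2 (Function.update a j (a j + ε * a j ^ (1 - α))) := by
  ext k
  rcases eq_or_ne k j with rfl | hk
  · simp [confShift]
  · simp [confShift, hk]

theorem conformable_jacobian_eq_partials_general {n m : ℕ} (α : ℝ)
    (f : EuclideanSpace ℝ (Fin n) → EuclideanSpace ℝ (Fin m))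
    (a : EuclideanSpace ℝ (Fin n))
    (L : EuclideanSpace ℝ (Fin n) →ₗ[ℝ] EuclideanSpace ℝ (Fin m))
    (hL : ConformableAt α f a L) :
    ∀ (i : Fin m) (j : Fin n),
      HasConfPartialAt α (fun x => f x i) a j (L (EuclideanSpace.single j 1) i) := by
  intro i j
  have hdir := tendsto_inv_smul_of_tendsto_norm_sub_div (g := fun h => f (confShift α a h) - f a)
    (by simpa only [ConformableAt, sub_sub] using hL) (v := EuclideanSpace.single j 1) (by simp)
  have hcoord := ((PiLp.continuous_apply 2 _ i).tendsto _).comp hdir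
  refine hcoord.congr fun ε => ?_
  simp [confShift_smul_single, div_eq_inv_mul]

/-- If `f : ℝⁿ → ℝᵐ` is conformably `α`-differentiable at `a` (each `aᵢ > 0`), then all
conformable partial derivatives `(∂^α/∂xⱼ^α)fᵢ(a)` exist and give the entries of the
conformable Jacobian matrix: `f^α(a)_{ij} = (∂^α/∂xⱼ^α)fᵢ(a)`. -/
theorem conformable_jacobian_eq_partials {n m : ℕ} (α : ℝ) (hα : α ∈ Set.Ioc (0:ℝ) 1)
    (f : EuclideanSpace ℝ (Fin n) → EuclideanSpace ℝ (Fin m))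
    (a : EuclideanSpace ℝ (Fin n)) (ha : ∀ i, 0 < a i)
    (L : EuclideanSpace ℝ (Fin n) →ₗ[ℝ] EuclideanSpace ℝ (Fin m))
    (hL : ConformableAt α f a L) :
    ∀ (i : Fin m) (j : Fin n),
      HasConfPartialAt α (fun x => f x i) a j (L (EuclideanSpace.single j 1) i) :=
  conformable_jacobian_eq_partials_general α f a L hL
end

section
/- Let f : ℝ → ℝ, α ∈ (0,1], and t₀ > 0. If f is α-differentiable at t₀ (i.e., T_α(f)(t₀) exists), then f is continuous at t₀. -/
open Filter Topology

theorem HasConfDerivAt.hasDerivAt_comp {α : ℝ} {f : ℝ → ℝ} {x L : ℝ}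
    (hf : HasConfDerivAt α f x L) : HasDerivAt (fun h => f (x + h * x ^ (1 - α))) L 0 := by
  rw [hasDerivAt_iff_tendsto_slope_zero]
  refine hf.congr fun h => ?_
  simp only [zero_add, zero_mul, add_zero, smul_eq_mul, div_eq_inv_mul]

theorem continuousAt_of_continuousAt_comp_add_mul {f : ℝ → ℝ} {x c : ℝ} (hc : c ≠ 0)
    (hf : ContinuousAt (fun h => f (x + h * c)) 0) : ContinuousAt f x := by
  have hφ : ContinuousAt (fun t => (t - x) / c) x := by fun_prop
  have hcomp := ContinuousAt.comp (x := x) (by simpa using hf) hφ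
  refine hcomp.congr (Eventually.of_forall fun t => ?_)
  simp only [Function.comp_apply, div_mul_cancel₀ _ hc, add_sub_cancel]

theorem continuousAt_of_hasConfDerivAt_general (α : ℝ) (f : ℝ → ℝ)
    (t₀ : ℝ) (ht₀ : 0 < t₀) (F : ℝ) (hf : HasConfDerivAt α f t₀ F) :
    ContinuousAt f t₀ :=
  continuousAt_of_continuousAt_comp_add_mul (Real.rpow_pos_of_pos ht₀ _).ne'
    hf.hasDerivAt_comp.continuousAt

/-- If `f` is `α`-differentiable at `t₀ > 0`, then `f` is continuous at `t₀`. -/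
theorem continuousAt_of_hasConfDerivAt (α : ℝ) (hα : α ∈ Set.Ioc (0:ℝ) 1) (f : ℝ → ℝ)
    (t₀ : ℝ) (ht₀ : 0 < t₀) (F : ℝ) (hf : HasConfDerivAt α f t₀ F) :
    ContinuousAt f t₀ :=
  continuousAt_of_hasConfDerivAt_general α f t₀ ht₀ F hf
end

section
/- Let α ∈ (0,1], t > 0, and f : ℝ → ℝ. If f is differentiable at t (in the usual sense), then f is α-differentiable at t and T_α(f)(t) = t^{1-α}·f'(t). -/
open Filter Topology

theorem HasDerivAt.tendsto_slope_mul_zero {f : ℝ → ℝ} {f' x : ℝ} (hf : HasDerivAt f f' x)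
    (c : ℝ) :
    Tendsto (fun h : ℝ => (f (x + h * c) - f x) / h) (𝓝[≠] 0) (𝓝 (c * f')) := by
  have hline : HasDerivAt (fun h : ℝ => x + h * c) c 0 := by
    simpa using ((hasDerivAt_id (0 : ℝ)).mul_const c).const_add x
  have hcomp : HasDerivAt (fun h : ℝ => f (x + h * c)) (f' * c) 0 :=
    hf.comp_of_eq 0 hline (by simp)
  simpa [div_eq_inv_mul, mul_comm c] using hasDerivAt_iff_tendsto_slope_zero.mp hcomp

theorem hasConfDerivAt_of_differentiableAt_general (α : ℝ) (t : ℝ)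
    (f : ℝ → ℝ) (hf : DifferentiableAt ℝ f t) :
    HasConfDerivAt α f t (t ^ (1 - α) * deriv f t) :=
  hf.hasDerivAt.tendsto_slope_mul_zero _

/-- If `f` is differentiable at `t > 0` in the usual sense, then `f` is
`α`-differentiable at `t` and `T_α(f)(t) = t^{1-α}·f'(t)`. -/
theorem hasConfDerivAt_of_differentiableAt (α : ℝ) (hα : α ∈ Set.Ioc (0:ℝ) 1) (t : ℝ)
    (ht : 0 < t) (f : ℝ → ℝ) (hf : DifferentiableAt ℝ f t) :
    HasConfDerivAt α f t (t ^ (1 - α) * deriv f t) :=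
  hasConfDerivAt_of_differentiableAt_general α t f hf
end
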